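/- Bounded Convergence Theorem for the RDS integral: let α ∈ BV[a,b] and let {f_n} be a uniformly bounded sequence of functions on [a,b] with each f_n RDS integrable with respect to α, f_n → f pointwise, and f RDS integrable with respect to α. Then lim_{n→∞} ∫_a^b f_n dα = ∫_a^b f dα. -/

import Mathlib

open Set Filter Topology
open scoped Classical

noncomputable section

/-- A partition `a = x 0 < x 1 < ... < x n = b` of `[a,b]`. -/
structure RDSPartition (a b : ℝ) where
  n : ℕ
  x : ℕ → ℝ
  mono : ∀ i, i < n → x i < x (i + 1)
  first : x 0 = a
  last : x n = b

/-- Right limit `α(t+)`, with the convention `α(b+) = α(b)` at the right endpoint. -/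
def rLim (b : ℝ) (α : ℝ → ℝ) (t : ℝ) : ℝ :=
  if t < b then Function.rightLim α t else α t

/-- Left limit `α(t-)`, with the convention `α(a-) = α(a)` at the left endpoint. -/
def lLim (a : ℝ) (α : ℝ → ℝ) (t : ℝ) : ℝ :=
  if a < t then Function.leftLim α t else α t

/-- `α`-length of the singleton `{t}` inside `[a,b]`: `α(t+) - α(t-)`. -/
def muPt (a b : ℝ) (α : ℝ → ℝ) (t : ℝ) : ℝ :=
  rLim b α t - lLim a α t

/-- `α`-length of the open interval `(c,d)` inside `[a,b]`: `α(d-) - α(c+)`. -/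
def muIoo (a b : ℝ) (α : ℝ → ℝ) (c d : ℝ) : ℝ :=
  lLim a α d - rLim b α c

/-- `f` is a step function with respect to the partition `P`: it is constant on each
open subinterval `(x (i-1), x i)` of `P`. -/
def IsStepOn (a b : ℝ) (f : ℝ → ℝ) (P : RDSPartition a b) : Prop :=
  ∀ i, i < P.n → ∀ s ∈ Set.Ioo (P.x i) (P.x (i + 1)),
    f s = f ((P.x i + P.x (i + 1)) / 2)

/-- The RDS integral of a step function with respect to the partition `P`:
`Σ_{i=0}^n f(x_i) μ_α({x_i}) + Σ_{i=1}^n c_i μ_α(I_i)`. -/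
def stepInt (a b : ℝ) (α : ℝ → ℝ) (P : RDSPartition a b) (f : ℝ → ℝ) : ℝ :=
  (∑ i ∈ Finset.range (P.n + 1), f (P.x i) * muPt a b α (P.x i)) +
    ∑ i ∈ Finset.range P.n,
      f ((P.x i + P.x (i + 1)) / 2) * muIoo a b α (P.x i) (P.x (i + 1))

/-- Upper envelope: infimum of RDS step integrals of step functions above `f` on `[a,b]`. -/
def upperRDS (a b : ℝ) (α f : ℝ → ℝ) : ℝ :=
  sInf { r | ∃ (u : ℝ → ℝ) (P : RDSPartition a b), IsStepOn a b u P ∧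
    (∀ t ∈ Set.Icc a b, f t ≤ u t) ∧ r = stepInt a b α P u }

/-- Lower envelope: supremum of RDS step integrals of step functions below `f` on `[a,b]`. -/
def lowerRDS (a b : ℝ) (α f : ℝ → ℝ) : ℝ :=
  sSup { r | ∃ (v : ℝ → ℝ) (P : RDSPartition a b), IsStepOn a b v P ∧
    (∀ t ∈ Set.Icc a b, v t ≤ f t) ∧ r = stepInt a b α P v }

/-- RDS integrability with respect to an increasing integrator. -/
def RDSIntegrableInc (a b : ℝ) (α f : ℝ → ℝ) : Prop :=
  lowerRDS a b α f = upperRDS a b α f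

/-- The RDS integral with respect to an increasing integrator. -/
def RDSIntegralInc (a b : ℝ) (α f : ℝ → ℝ) : ℝ := upperRDS a b α f

/-- RDS integrability with respect to a BV integrator: some Jordan decomposition
into increasing functions works. -/
def RDSIntegrable (a b : ℝ) (α f : ℝ → ℝ) : Prop :=
  ∃ αp αm : ℝ → ℝ, MonotoneOn αp (Set.Icc a b) ∧ MonotoneOn αm (Set.Icc a b) ∧
    (∀ t ∈ Set.Icc a b, α t = αp t - αm t) ∧
    RDSIntegrableInc a b αp f ∧ RDSIntegrableInc a b αm f

/-- The RDS integral with respect to a BV integrator. -/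
def RDSIntegral (a b : ℝ) (α f : ℝ → ℝ) : ℝ :=
  if h : RDSIntegrable a b α f then
    RDSIntegralInc a b h.choose f - RDSIntegralInc a b h.choose_spec.choose f
  else 0

/-- `f` is bounded on `[a,b]`. -/
def BddOn (a b : ℝ) (f : ℝ → ℝ) : Prop :=
  ∃ M : ℝ, ∀ t ∈ Set.Icc a b, |f t| ≤ M

end

/-!
For an increasing integrator `β`, the RDS step integral of a step function is its integral against
the Lebesgue–Stieltjes measure of `β` (extended by constants outside `[a,b]`): the atoms of that
measure are the jumps `μ_β({x})` and the open intervals carry `μ_β((c,d))`. A Darboux squeeze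
between the infimum of upper and the supremum of lower step functions then shows that a bounded
RDS-integrable `f` is a.e. equal to a measurable function and that its RDS integral is its
Lebesgue–Stieltjes integral.

For `α` of bounded variation, the Jordan decomposition `α = p - q` with `Δp + Δq` equal to the
variation of `α` is minimal: any other decomposition is `p + r, q + r` with `r` increasing. Hence
the RDS integral equals `∫ f dμ_p - ∫ f dμ_q` for two measures that do not depend on `f`, and the
theorem follows from the bounded convergence theorem for these two finite measures.
-/

open MeasureTheory

section StieltjesMeasure

variable {a b : ℝ} {β γ : ℝ → ℝ}

/-- `β` is extended by constants outside `[a,b]`, so that the jumps of this Stieltjes function at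
`a` and `b` are `β(a+) - β(a)` and `β(b) - β(b-)`, as in `muPt`. -/
noncomputable def MonotoneOn.stieltjesIcc (hab : a ≤ b) (hβ : MonotoneOn β (Icc a b)) :
    StieltjesFunction ℝ :=
  (Monotone.IccExtend hab (monotoneOn_iff_monotone.1 hβ)).stieltjesFunction

namespace MonotoneOn

variable (hab : a ≤ b) (hβ : MonotoneOn β (Icc a b))

lemma stieltjesIcc_apply {x : ℝ} (hx : x ∈ Icc a b) : hβ.stieltjesIcc hab x = rLim b β x := by
  set E := IccExtend hab fun t : Icc a b => β t
  have hE : Monotone E := Monotone.IccExtend hab (monotoneOn_iff_monotone.1 hβ)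
  change Function.rightLim E x = _
  rcases hx.2.lt_or_eq with hxb | rfl
  · have hEβ : E =ᶠ[𝓝[>] x] β := by
      filter_upwards [Ioo_mem_nhdsGT hxb] with y hy
      exact IccExtend_of_mem hab _ ⟨hx.1.trans hy.1.le, hy.2.le⟩
    rw [rLim, if_pos hxb]
    exact (rightLim_eq_of_tendsto ((hE.tendsto_rightLim x).congr' hEβ)).symm
  · have hEx : (fun _ => β x) =ᶠ[𝓝[>] x] E := by
      filter_upwards [self_mem_nhdsWithin] with y hy
      exact (IccExtend_of_right_le hab (fun t : Icc a x => β t) (le_of_lt hy)).symm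
    rw [rLim, if_neg (lt_irrefl x)]
    exact rightLim_eq_of_tendsto (tendsto_const_nhds.congr' hEx)

lemma leftLim_stieltjesIcc {x : ℝ} (hx : x ∈ Icc a b) :
    Function.leftLim (hβ.stieltjesIcc hab) x = lLim a β x := by
  set E := IccExtend hab fun t : Icc a b => β t
  have hE : Monotone E := Monotone.IccExtend hab (monotoneOn_iff_monotone.1 hβ)
  change Function.leftLim (Function.rightLim E) x = _
  rw [leftLim_rightLim (hE.tendsto_leftLim x)]
  rcases hx.1.lt_or_eq with hax | rfl
  · have hEβ : E =ᶠ[𝓝[<] x] β := by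
      filter_upwards [Ioo_mem_nhdsLT hax] with y hy
      exact IccExtend_of_mem hab _ ⟨hy.1.le, hy.2.le.trans hx.2⟩
    rw [lLim, if_pos hax]
    exact (leftLim_eq_of_tendsto ((hE.tendsto_leftLim x).congr' hEβ)).symm
  · have hEa : (fun _ => β a) =ᶠ[𝓝[<] a] E := by
      filter_upwards [self_mem_nhdsWithin] with y hy
      exact (IccExtend_of_le_left hab (fun t : Icc a b => β t) (le_of_lt hy)).symm
    rw [lLim, if_neg (lt_irrefl a)]
    exact leftLim_eq_of_tendsto (tendsto_const_nhds.congr' hEa)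

lemma measureReal_singleton_stieltjesIcc {x : ℝ} (hx : x ∈ Icc a b) :
    (hβ.stieltjesIcc hab).measure.real {x} = muPt a b β x := by
  rw [measureReal_def, StieltjesFunction.measure_singleton, ENNReal.toReal_ofReal, muPt,
    stieltjesIcc_apply hab hβ hx, leftLim_stieltjesIcc hab hβ hx]
  exact sub_nonneg.2 ((hβ.stieltjesIcc hab).mono.leftLim_le le_rfl)

lemma measureReal_Ioo_stieltjesIcc {c d : ℝ} (hc : c ∈ Icc a b) (hd : d ∈ Icc a b) (hcd : c < d) :
    (hβ.stieltjesIcc hab).measure.real (Ioo c d) = muIoo a b β c d := by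
  rw [measureReal_def, StieltjesFunction.measure_Ioo, ENNReal.toReal_ofReal, muIoo,
    stieltjesIcc_apply hab hβ hc, leftLim_stieltjesIcc hab hβ hd]
  exact sub_nonneg.2 ((hβ.stieltjesIcc hab).mono.le_leftLim hcd)

lemma stieltjesIcc_congr (hγ : MonotoneOn γ (Icc a b)) (h : EqOn β γ (Icc a b)) :
    hβ.stieltjesIcc hab = hγ.stieltjesIcc hab := by
  have hext : (IccExtend hab fun t : Icc a b => β t) = IccExtend hab fun t : Icc a b => γ t :=
    congrArg _ (funext fun t => h t.2)
  ext x
  exact congrArg (Function.rightLim · x) hext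

lemma stieltjesIcc_add (hγ : MonotoneOn γ (Icc a b)) :
    (hβ.add hγ).stieltjesIcc hab = hβ.stieltjesIcc hab + hγ.stieltjesIcc hab := by
  have hEβ := Monotone.IccExtend hab (monotoneOn_iff_monotone.1 hβ)
  have hEγ := Monotone.IccExtend hab (monotoneOn_iff_monotone.1 hγ)
  ext x
  exact rightLim_eq_of_tendsto ((hEβ.tendsto_rightLim x).add (hEγ.tendsto_rightLim x))

end MonotoneOn

end StieltjesMeasure

namespace RDSPartition

variable {a b : ℝ} (P : RDSPartition a b)

lemma x_le_x {i j : ℕ} (hij : i ≤ j) (hj : j ≤ P.n) : P.x i ≤ P.x j := by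
  induction j, hij using Nat.le_induction with
  | base => exact le_rfl
  | succ j _ ih => exact (ih (by omega)).trans (P.mono j (by omega)).le

lemma x_mem_Icc {i : ℕ} (hi : i ≤ P.n) : P.x i ∈ Icc a b :=
  ⟨P.first.ge.trans (P.x_le_x (Nat.zero_le i) hi), (P.x_le_x hi le_rfl).trans P.last.le⟩

def single (hab : a < b) : RDSPartition a b where
  n := 1
  x i := if i = 0 then a else b
  mono i hi := by simpa [Nat.lt_one_iff.1 hi] using hab
  first := rfl
  last := rfl

end RDSPartition

section StepIntegral

variable {μ : Measure ℝ} [IsLocallyFiniteMeasure μ] {u : ℝ → ℝ}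

lemma integrableOn_Ioo_of_eqOn_const {c d k : ℝ} (hu : EqOn u (fun _ => k) (Ioo c d)) :
    IntegrableOn u (Ioo c d) μ :=
  (integrableOn_const measure_Ioo_lt_top.ne).congr_fun hu.symm measurableSet_Ioo

lemma integrableOn_Ioc_of_eqOn_Ioo {c d k : ℝ} (hcd : c < d)
    (hu : EqOn u (fun _ => k) (Ioo c d)) : IntegrableOn u (Ioc c d) μ := by
  rw [← Ioo_union_right hcd]
  exact (integrableOn_Ioo_of_eqOn_const hu).union
    (integrableOn_singleton (hx := measure_singleton_lt_top))

lemma setIntegral_Ioc_of_eqOn_Ioo {c d k : ℝ} (hcd : c < d)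
    (hu : EqOn u (fun _ => k) (Ioo c d)) :
    ∫ t in Ioc c d, u t ∂μ = k * μ.real (Ioo c d) + u d * μ.real {d} := by
  rw [← Ioo_union_right hcd, setIntegral_union (by simp) (measurableSet_singleton d)
    (integrableOn_Ioo_of_eqOn_const hu) (integrableOn_singleton (hx := measure_singleton_lt_top)),
    setIntegral_congr_fun measurableSet_Ioo hu, setIntegral_const, integral_singleton,
    smul_eq_mul, smul_eq_mul, mul_comm, mul_comm (u d)]

variable {a b : ℝ} {P : RDSPartition a b}

lemma IsStepOn.integrableOn_and_setIntegral_Icc_x (hu : IsStepOn a b u P) {k : ℕ}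
    (hk : k ≤ P.n) :
    IntegrableOn u (Icc a (P.x k)) μ ∧ ∫ t in Icc a (P.x k), u t ∂μ =
      (∑ i ∈ Finset.range (k + 1), u (P.x i) * μ.real {P.x i}) +
        ∑ i ∈ Finset.range k,
          u ((P.x i + P.x (i + 1)) / 2) * μ.real (Ioo (P.x i) (P.x (i + 1))) := by
  induction k with
  | zero =>
    rw [P.first, Icc_self]
    refine ⟨integrableOn_singleton (hx := measure_singleton_lt_top), ?_⟩
    simp [P.first, mul_comm, measureReal_def]
  | succ k ih =>
    obtain ⟨hint, hval⟩ := ih (by omega)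
    have hk' : P.x k < P.x (k + 1) := P.mono k hk
    have hconst : EqOn u (fun _ => u ((P.x k + P.x (k + 1)) / 2)) (Ioo (P.x k) (P.x (k + 1))) :=
      hu k hk
    have hsplit : Icc a (P.x k) ∪ Ioc (P.x k) (P.x (k + 1)) = Icc a (P.x (k + 1)) :=
      Icc_union_Ioc_eq_Icc (P.x_mem_Icc (by omega)).1 hk'.le
    have hint' : IntegrableOn u (Ioc (P.x k) (P.x (k + 1))) μ :=
      integrableOn_Ioc_of_eqOn_Ioo hk' hconst
    refine ⟨hsplit ▸ hint.union hint', ?_⟩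
    have hdisj : Disjoint (Icc a (P.x k)) (Ioc (P.x k) (P.x (k + 1))) :=
      (Iic_disjoint_Ioi le_rfl).mono Icc_subset_Iic_self Ioc_subset_Ioi_self
    rw [← hsplit, setIntegral_union hdisj measurableSet_Ioc hint hint', hval,
      setIntegral_Ioc_of_eqOn_Ioo hk' hconst]
    simp only [Finset.sum_range_succ]
    ring

lemma IsStepOn.integrableOn_Icc (hu : IsStepOn a b u P) : IntegrableOn u (Icc a b) μ :=
  P.last ▸ (hu.integrableOn_and_setIntegral_Icc_x (μ := μ) le_rfl).1

lemma IsStepOn.setIntegral_stieltjesIcc_eq_stepInt {β : ℝ → ℝ} (hab : a ≤ b)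
    (hβ : MonotoneOn β (Icc a b)) (hu : IsStepOn a b u P) :
    ∫ t in Icc a b, u t ∂(hβ.stieltjesIcc hab).measure = stepInt a b β P u := by
  have h := (hu.integrableOn_and_setIntegral_Icc_x
    (μ := (hβ.stieltjesIcc hab).measure) le_rfl).2
  rw [P.last] at h
  rw [h, stepInt]
  congr 1
  · refine Finset.sum_congr rfl fun i hi => ?_
    have hi : i ≤ P.n := Nat.lt_succ_iff.1 (Finset.mem_range.1 hi)
    rw [hβ.measureReal_singleton_stieltjesIcc hab (P.x_mem_Icc hi)]
  · refine Finset.sum_congr rfl fun i hi => ?_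
    have hi : i < P.n := Finset.mem_range.1 hi
    rw [hβ.measureReal_Ioo_stieltjesIcc hab (P.x_mem_Icc hi.le) (P.x_mem_Icc hi) (P.mono i hi)]

end StepIntegral

section Sandwich

variable {X : Type*} [MeasurableSpace X] {μ : Measure X} [IsFiniteMeasure μ] {f : X → ℝ}
  {M I : ℝ}

lemma exists_integrable_ae_ge_integral_le
    (hupper : ∀ ε > 0, ∃ u : X → ℝ, AEStronglyMeasurable u μ ∧ (∀ x, |u x| ≤ M) ∧
      f ≤ᵐ[μ] u ∧ ∫ x, u x ∂μ < I + ε) :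
    ∃ U : X → ℝ, Integrable U μ ∧ f ≤ᵐ[μ] U ∧ ∫ x, U x ∂μ ≤ I := by
  choose u hum hub hfu hui using fun k : ℕ => hupper (1 / (k + 1)) Nat.one_div_pos_of_nat
  have hbdd : ∀ x, BddBelow (Set.range fun k => u k x) :=
    fun x => ⟨-M, by rintro _ ⟨k, rfl⟩; exact (abs_le.1 (hub k x)).1⟩
  have hUi : Integrable (fun x => ⨅ k, u k x) μ := by
    refine .of_bound (AEMeasurable.iInf fun k => (hum k).aemeasurable).aestronglyMeasurable M
      (ae_of_all _ fun x => abs_le.2 ⟨le_ciInf fun k => (abs_le.1 (hub k x)).1, ?_⟩)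
    exact (ciInf_le (hbdd x) 0).trans (abs_le.1 (hub 0 x)).2
  refine ⟨_, hUi, (ae_all_iff.2 hfu).mono fun x hx => le_ciInf hx, ?_⟩
  refine le_of_forall_pos_lt_add fun ε hε => ?_
  obtain ⟨k, hk⟩ := exists_nat_one_div_lt hε
  calc ∫ x, ⨅ k, u k x ∂μ ≤ ∫ x, u k x ∂μ :=
        integral_mono hUi (.of_bound (hum k) M (ae_of_all _ (hub k))) fun x => ciInf_le (hbdd x) k
    _ < I + 1 / (k + 1) := hui k
    _ < I + ε := by linarith

lemma exists_integrable_ae_le_le_integral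
    (hlower : ∀ ε > 0, ∃ v : X → ℝ, AEStronglyMeasurable v μ ∧ (∀ x, |v x| ≤ M) ∧
      v ≤ᵐ[μ] f ∧ I - ε < ∫ x, v x ∂μ) :
    ∃ V : X → ℝ, Integrable V μ ∧ V ≤ᵐ[μ] f ∧ I ≤ ∫ x, V x ∂μ := by
  obtain ⟨U, hU, hfU, hUI⟩ := exists_integrable_ae_ge_integral_le (f := -f) (M := M) (I := -I)
    fun ε hε => by
      obtain ⟨v, hvm, hvb, hvf, hvI⟩ := hlower ε hε
      refine ⟨-v, hvm.neg, fun x => (abs_neg (v x)).trans_le (hvb x),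
        hvf.mono fun x hx => neg_le_neg hx, ?_⟩
      rw [Pi.neg_def, integral_neg]
      linarith
  refine ⟨-U, hU.neg, hfU.mono fun x hx => neg_le.1 hx, ?_⟩
  rw [Pi.neg_def, integral_neg]
  linarith

lemma integrable_and_integral_eq_of_forall_sandwich
    (hupper : ∀ ε > 0, ∃ u : X → ℝ, AEStronglyMeasurable u μ ∧ (∀ x, |u x| ≤ M) ∧
      f ≤ᵐ[μ] u ∧ ∫ x, u x ∂μ < I + ε)
    (hlower : ∀ ε > 0, ∃ v : X → ℝ, AEStronglyMeasurable v μ ∧ (∀ x, |v x| ≤ M) ∧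
      v ≤ᵐ[μ] f ∧ I - ε < ∫ x, v x ∂μ) :
    Integrable f μ ∧ ∫ x, f x ∂μ = I := by
  obtain ⟨U, hU, hfU, hUI⟩ := exists_integrable_ae_ge_integral_le hupper
  obtain ⟨V, hV, hVf, hIV⟩ := exists_integrable_ae_le_le_integral hlower
  have hVU : V ≤ᵐ[μ] U := hVf.trans hfU
  have hUV : V =ᵐ[μ] U := (integral_eq_iff_of_ae_le hV hU hVU).1
    (le_antisymm (integral_mono_ae hV hU hVU) (hUI.trans hIV))
  have hfU' : f =ᵐ[μ] U := by
    filter_upwards [hfU, hVf, hUV] with x h₁ h₂ h₃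
    exact le_antisymm h₁ (h₃ ▸ h₂)
  refine ⟨hU.congr hfU'.symm, (integral_congr_ae hfU').trans (le_antisymm hUI ?_)⟩
  exact hIV.trans (integral_mono_ae hV hU hVU)

end Sandwich

section IncreasingIntegrator

variable {a b : ℝ} {β f : ℝ → ℝ} {M : ℝ}

lemma IsStepOn.comp {u : ℝ → ℝ} {P : RDSPartition a b} (hu : IsStepOn a b u P) (φ : ℝ → ℝ) :
    IsStepOn a b (fun t => φ (u t)) P :=
  fun i hi s hs => congrArg φ (hu i hi s hs)

lemma exists_setIntegral_lt_upperRDS_add (hab : a < b) (hβ : MonotoneOn β (Icc a b))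
    (hf : ∀ t ∈ Icc a b, |f t| ≤ M) {ε : ℝ} (hε : 0 < ε) :
    ∃ u : ℝ → ℝ, IntegrableOn u (Icc a b) (hβ.stieltjesIcc hab.le).measure ∧
      (∀ t, |u t| ≤ M) ∧ (∀ t ∈ Icc a b, f t ≤ u t) ∧
      ∫ t in Icc a b, u t ∂(hβ.stieltjesIcc hab.le).measure < upperRDS a b β f + ε := by
  have hM : 0 ≤ M := (abs_nonneg _).trans (hf a (left_mem_Icc.2 hab.le))
  obtain ⟨_, ⟨w, P, hw, hfw, rfl⟩, hlt⟩ :=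
    exists_lt_of_csInf_lt (by exact ⟨_, fun _ => M, .single hab, fun _ _ _ _ => rfl,
      fun t ht => (abs_le.1 (hf t ht)).2, rfl⟩) (lt_add_of_pos_right (upperRDS a b β f) hε)
  have hu := hw.comp fun y => max (-M) (min M y)
  refine ⟨_, hu.integrableOn_Icc, fun t => abs_le.2 ⟨le_max_left _ _, max_le (by linarith)
    (min_le_left _ _)⟩, fun t ht => le_max_of_le_right (le_min (abs_le.1 (hf t ht)).2 (hfw t ht)),
    lt_of_le_of_lt ?_ hlt⟩
  rw [← hw.setIntegral_stieltjesIcc_eq_stepInt hab.le hβ]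
  exact setIntegral_mono_on hu.integrableOn_Icc hw.integrableOn_Icc measurableSet_Icc
    fun t ht => max_le ((abs_le.1 (hf t ht)).1.trans (hfw t ht)) (min_le_right _ _)

lemma exists_lowerRDS_sub_lt_setIntegral (hab : a < b) (hβ : MonotoneOn β (Icc a b))
    (hf : ∀ t ∈ Icc a b, |f t| ≤ M) {ε : ℝ} (hε : 0 < ε) :
    ∃ v : ℝ → ℝ, IntegrableOn v (Icc a b) (hβ.stieltjesIcc hab.le).measure ∧
      (∀ t, |v t| ≤ M) ∧ (∀ t ∈ Icc a b, v t ≤ f t) ∧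
      lowerRDS a b β f - ε < ∫ t in Icc a b, v t ∂(hβ.stieltjesIcc hab.le).measure := by
  have hM : 0 ≤ M := (abs_nonneg _).trans (hf a (left_mem_Icc.2 hab.le))
  obtain ⟨_, ⟨w, P, hw, hwf, rfl⟩, hlt⟩ :=
    exists_lt_of_lt_csSup (by exact ⟨_, fun _ => -M, .single hab, fun _ _ _ _ => rfl,
      fun t ht => (abs_le.1 (hf t ht)).1, rfl⟩) (sub_lt_self (lowerRDS a b β f) hε)
  have hv := hw.comp fun y => min M (max (-M) y)
  refine ⟨_, hv.integrableOn_Icc, fun t => abs_le.2 ⟨le_min (by linarith) (le_max_left _ _),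
    min_le_left _ _⟩, fun t ht => min_le_of_right_le (max_le (abs_le.1 (hf t ht)).1 (hwf t ht)),
    lt_of_lt_of_le hlt ?_⟩
  rw [← hw.setIntegral_stieltjesIcc_eq_stepInt hab.le hβ]
  exact setIntegral_mono_on hw.integrableOn_Icc hv.integrableOn_Icc measurableSet_Icc
    fun t ht => le_min ((hwf t ht).trans (abs_le.1 (hf t ht)).2) (le_max_right _ _)

lemma RDSIntegrableInc.integrableOn_and_setIntegral_eq (hab : a < b)
    (hβ : MonotoneOn β (Icc a b)) (hf : ∀ t ∈ Icc a b, |f t| ≤ M)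
    (h : RDSIntegrableInc a b β f) :
    IntegrableOn f (Icc a b) (hβ.stieltjesIcc hab.le).measure ∧
      ∫ t in Icc a b, f t ∂(hβ.stieltjesIcc hab.le).measure = RDSIntegralInc a b β f := by
  have hI : lowerRDS a b β f = RDSIntegralInc a b β f := h
  have : IsFiniteMeasure ((hβ.stieltjesIcc hab.le).measure.restrict (Icc a b)) :=
    isFiniteMeasure_restrict.2 measure_Icc_lt_top.ne
  refine integrable_and_integral_eq_of_forall_sandwich (M := M) (fun ε hε => ?_) fun ε hε => ?_
  · obtain ⟨u, hu, hub, hfu, hlt⟩ := exists_setIntegral_lt_upperRDS_add hab hβ hf hε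
    exact ⟨u, hu.aestronglyMeasurable, hub, (ae_restrict_mem measurableSet_Icc).mono hfu, hlt⟩
  · obtain ⟨v, hv, hvb, hvf, hlt⟩ := exists_lowerRDS_sub_lt_setIntegral hab hβ hf hε
    exact ⟨v, hv.aestronglyMeasurable, hvb, (ae_restrict_mem measurableSet_Icc).mono hvf,
      hI ▸ hlt⟩

end IncreasingIntegrator

section JordanDecomposition

variable {ι : Type*} [LinearOrder ι]

lemma eVariationOn.sub_le {E : Type*} [SeminormedAddCommGroup E] (f g : ι → E) (s : Set ι) :
    eVariationOn (f - g) s ≤ eVariationOn f s + eVariationOn g s := by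
  refine iSup_le fun ⟨n, u, hu, us⟩ => ?_
  calc ∑ i ∈ Finset.range n, edist ((f - g) (u (i + 1))) ((f - g) (u i))
      ≤ ∑ i ∈ Finset.range n, (edist (f (u (i + 1))) (f (u i)) + edist (g (u (i + 1))) (g (u i))) :=
        Finset.sum_le_sum fun i _ => by
          simpa [sub_eq_add_neg, edist_neg_neg] using
            edist_add_add_le (f (u (i + 1))) (-g (u (i + 1))) (f (u i)) (-g (u i))
    _ = (∑ i ∈ Finset.range n, edist (f (u (i + 1))) (f (u i))) +
          ∑ i ∈ Finset.range n, edist (g (u (i + 1))) (g (u i)) := Finset.sum_add_distrib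
    _ ≤ eVariationOn f s + eVariationOn g s :=
        add_le_add (eVariationOn.sum_le (f := f) hu us) (eVariationOn.sum_le (f := g) hu us)

variable {α p q p' q' : ι → ℝ} {s : Set ι}

lemma variationOnFromTo_le_of_eqOn_sub (hp : MonotoneOn p s) (hq : MonotoneOn q s)
    (h : EqOn α (p - q) s) {x y : ι} (hx : x ∈ s) (hy : y ∈ s) (hxy : x ≤ y) :
    variationOnFromTo α s x y ≤ (p y - p x) + (q y - q x) := by
  have hvar : eVariationOn α (s ∩ Icc x y) ≤ .ofReal (p y - p x) + .ofReal (q y - q x) :=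
    calc eVariationOn α (s ∩ Icc x y) = eVariationOn (p - q) (s ∩ Icc x y) :=
          eVariationOn.eq_of_eqOn (h.mono inter_subset_left)
      _ ≤ eVariationOn p (s ∩ Icc x y) + eVariationOn q (s ∩ Icc x y) := eVariationOn.sub_le ..
      _ ≤ _ := (add_le_add (hp.eVariationOn_eq hx hy).le (hq.eVariationOn_eq hx hy).le)
  rw [variationOnFromTo.eq_of_le α s hxy, ← ENNReal.toReal_ofReal (sub_nonneg.2 (hp hx hy hxy)),
    ← ENNReal.toReal_ofReal (sub_nonneg.2 (hq hx hy hxy)), ← ENNReal.toReal_add (by simp) (by simp)]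
  exact ENNReal.toReal_mono (by simp) hvar

/-- A Jordan decomposition whose increments add up to the variation of `α` is minimal. -/
lemma monotoneOn_sub_of_add_eq_variationOnFromTo (hp' : MonotoneOn p' s) (hq' : MonotoneOn q' s)
    (h' : EqOn α (p' - q') s) (h : EqOn α (p - q) s)
    (hvar : ∀ x ∈ s, ∀ y ∈ s, (p y - p x) + (q y - q x) = variationOnFromTo α s x y) :
    MonotoneOn (p' - p) s := by
  intro x hx y hy hxy
  have hle := variationOnFromTo_le_of_eqOn_sub hp' hq' h' hx hy hxy
  have hx' := h hx; have hy' := h hy; have hx'' := h' hx; have hy'' := h' hy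
  simp only [Pi.sub_apply] at hx' hy' hx'' hy'' ⊢
  linarith [hvar x hx y hy]

end JordanDecomposition

section BVIntegrator

variable {a b M : ℝ} {φ : ℝ → ℝ}

lemma RDSIntegrableInc.integrableOn_and_eq_add (hab : a < b) {p r p' : ℝ → ℝ}
    (hp : MonotoneOn p (Icc a b)) (hr : MonotoneOn r (Icc a b)) (hp' : MonotoneOn p' (Icc a b))
    (heq : EqOn (p + r) p' (Icc a b)) (hφ : ∀ t ∈ Icc a b, |φ t| ≤ M)
    (h : RDSIntegrableInc a b p' φ) :
    IntegrableOn φ (Icc a b) (hp.stieltjesIcc hab.le).measure ∧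
      RDSIntegralInc a b p' φ = ∫ t in Icc a b, φ t ∂(hp.stieltjesIcc hab.le).measure +
        ∫ t in Icc a b, φ t ∂(hr.stieltjesIcc hab.le).measure := by
  obtain ⟨hint, hval⟩ := h.integrableOn_and_setIntegral_eq hab hp' hφ
  have hμ : (hp'.stieltjesIcc hab.le).measure =
      (hp.stieltjesIcc hab.le).measure + (hr.stieltjesIcc hab.le).measure := by
    rw [← StieltjesFunction.measure_add, ← MonotoneOn.stieltjesIcc_add,
      MonotoneOn.stieltjesIcc_congr hab.le _ _ heq]
  rw [hμ, integrableOn_add_measure] at hint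
  rw [← hval, hμ, Measure.restrict_add, integral_add_measure hint.1 hint.2]
  exact ⟨hint.1, rfl⟩

/-- The decomposition chosen in `RDSIntegral` is `p + r, q + r` with `r` increasing, and the
contributions of `r` cancel. -/
lemma RDSIntegrable.integrableOn_and_RDSIntegral_eq (hab : a < b) {α p q : ℝ → ℝ}
    (hp : MonotoneOn p (Icc a b)) (hq : MonotoneOn q (Icc a b)) (hpq : EqOn α (p - q) (Icc a b))
    (hvar : ∀ x ∈ Icc a b, ∀ y ∈ Icc a b,
      (p y - p x) + (q y - q x) = variationOnFromTo α (Icc a b) x y)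
    (hφ : ∀ t ∈ Icc a b, |φ t| ≤ M) (h : RDSIntegrable a b α φ) :
    IntegrableOn φ (Icc a b) (hp.stieltjesIcc hab.le).measure ∧
      IntegrableOn φ (Icc a b) (hq.stieltjesIcc hab.le).measure ∧
      RDSIntegral a b α φ = ∫ t in Icc a b, φ t ∂(hp.stieltjesIcc hab.le).measure -
        ∫ t in Icc a b, φ t ∂(hq.stieltjesIcc hab.le).measure := by
  rw [RDSIntegral, dif_pos h]
  obtain ⟨hp', hq', hα', hip, hiq⟩ := h.choose_spec.choose_spec
  set p' := h.choose
  set q' := h.choose_spec.choose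
  have hr : MonotoneOn (p' - p) (Icc a b) :=
    monotoneOn_sub_of_add_eq_variationOnFromTo hp' hq' (fun t ht => hα' t ht) hpq hvar
  have hq'_eq : EqOn (q + (p' - p)) q' (Icc a b) := fun t ht => by
    have h₁ := hpq ht
    have h₂ := hα' t ht
    simp only [Pi.add_apply, Pi.sub_apply] at h₁ ⊢
    linarith
  obtain ⟨hφp, hvp⟩ := hip.integrableOn_and_eq_add hab hp hr hp'
    (fun t _ => add_sub_cancel (p t) (p' t)) hφ
  obtain ⟨hφq, hvq⟩ := hiq.integrableOn_and_eq_add hab hq hr hq' hq'_eq hφ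
  exact ⟨hφp, hφq, by rw [hvp, hvq]; ring⟩

end BVIntegrator

lemma tendsto_setIntegral_of_abs_le_const {X : Type*} [MeasurableSpace X] {μ : Measure X}
    {s : Set X} (hs : MeasurableSet s) (hμs : μ s ≠ ⊤) {F : ℕ → X → ℝ} {g : X → ℝ} {M : ℝ}
    (hF : ∀ n, AEStronglyMeasurable (F n) (μ.restrict s)) (hM : ∀ n, ∀ x ∈ s, |F n x| ≤ M)
    (hlim : ∀ x ∈ s, Tendsto (fun n => F n x) atTop (𝓝 (g x))) :
    Tendsto (fun n => ∫ x in s, F n x ∂μ) atTop (𝓝 (∫ x in s, g x ∂μ)) :=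
  have : IsFiniteMeasure (μ.restrict s) := isFiniteMeasure_restrict.2 hμs
  tendsto_integral_filter_of_norm_le_const (Eventually.of_forall hF)
    ⟨M, Eventually.of_forall fun n => (ae_restrict_mem hs).mono (hM n)⟩
    ((ae_restrict_mem hs).mono hlim)

theorem stmt19 (a b : ℝ) (hab : a < b) (α : ℝ → ℝ)
    (hα : BoundedVariationOn α (Set.Icc a b)) (f : ℕ → ℝ → ℝ) (g : ℝ → ℝ) (M : ℝ)
    (hM : ∀ n, ∀ t ∈ Set.Icc a b, |f n t| ≤ M)
    (hfi : ∀ n, RDSIntegrable a b α (f n))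
    (hptwise : ∀ t ∈ Set.Icc a b, Tendsto (fun n => f n t) atTop (𝓝 (g t)))
    (hg : RDSIntegrable a b α g) :
    Tendsto (fun n => RDSIntegral a b α (f n)) atTop (𝓝 (RDSIntegral a b α g)) := by
  have hgM : ∀ t ∈ Icc a b, |g t| ≤ M := fun t ht =>
    le_of_tendsto (hptwise t ht).abs (Eventually.of_forall fun n => hM n t ht)
  obtain ⟨p, q, hp, hq, hpq, hvar⟩ := hα.locallyBoundedVariationOn.exists_monotoneOn_sub_monotoneOn'
  have hrep := fun φ (hφ : ∀ t ∈ Icc a b, |φ t| ≤ M) (h : RDSIntegrable a b α φ) =>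
    RDSIntegrable.integrableOn_and_RDSIntegral_eq (φ := φ) hab hp hq (fun t _ => congrFun hpq t)
      hvar hφ h
  rw [(hrep g hgM hg).2.2]
  refine ((tendsto_setIntegral_of_abs_le_const measurableSet_Icc measure_Icc_lt_top.ne
    (fun n => (hrep _ (hM n) (hfi n)).1.aestronglyMeasurable) hM hptwise).sub
    (tendsto_setIntegral_of_abs_le_const measurableSet_Icc measure_Icc_lt_top.ne
      (fun n => (hrep _ (hM n) (hfi n)).2.1.aestronglyMeasurable) hM hptwise)).congr fun n => ?_
  exact ((hrep _ (hM n) (hfi n)).2.2).symm
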